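/- For n ≥ 1, the set of two-term states {|j⟩ + i^ℓ |j'⟩ : j, j' ∈ {0,1}ⁿ, ℓ ∈ {0,1,2,3}} that are product states consists precisely of those pairs (j, j') with Hamming distance d_H(j,j') ≤ 1; in particular the number of unordered pairs {j,j'} with j ≠ j' giving product states is n·2^{n−1}. -/

import Mathlib

/-!
The coefficient `⟨k|v⟩` of an elementary tensor `v = ⨂ uᵢ` is `∏ uᵢ(kᵢ)`, so the coefficients
of a product state satisfy the `2 × 2` minor relations `⟨k|v⟩⟨k'|v⟩ = ⟨a|v⟩⟨b|v⟩`, where `k, k'`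
arise from `a, b` by exchanging one coordinate. If `|a⟩ + c|b⟩` with `c ≠ 0` is a product state
and `a, b` differ in two coordinates `i ≠ i'`, exchanging coordinate `i` produces two strings
equal to neither `a` nor `b`, and the relation reads `0 = c`. Conversely, if `a` and `b` differ
at most in coordinate `i`, then `|a⟩ + c|b⟩` is the elementary tensor with factor
`e_{aᵢ} + c e_{bᵢ}` at `i`.

The pairs at Hamming distance one are the edges of the hypercube, an `n`-regular graph on `2ⁿ`
vertices, so by the handshake lemma there are `n 2ⁿ / 2` of them.
-/

open Complex
open scoped TensorProduct PiTensorProduct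

/-- The computational basis vector `|j⟩` of `(ℂ²)^⊗n` indexed by a binary string `j`. -/
noncomputable def basisVec {n : ℕ} (j : Fin n → Bool) :
    ⨂[ℂ] _ : Fin n, (Fin 2 → ℂ) :=
  PiTensorProduct.tprod ℂ (fun i => fun k => if (k = 1) = (j i = true) then (1 : ℂ) else 0)

/-- A vector of `(ℂ²)^⊗n` is a product state if it is an elementary tensor. -/
def IsProductState {n : ℕ} (v : ⨂[ℂ] _ : Fin n, (Fin 2 → ℂ)) : Prop :=
  ∃ u : Fin n → (Fin 2 → ℂ), v = PiTensorProduct.tprod ℂ u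

open Finset Function

section Hamming

variable {ι : Type*} [Fintype ι] {β : ι → Type*} [∀ i, DecidableEq (β i)] {x y : ∀ i, β i}

theorem hammingDist_le_one_iff [Nonempty ι] :
    hammingDist x y ≤ 1 ↔ ∃ i, ∀ j, x j ≠ y j → j = i := by
  simp only [hammingDist, card_le_one_iff_subset_singleton, subset_singleton_iff', mem_filter,
    mem_univ, true_and]

theorem hammingDist_eq_one_iff :
    hammingDist x y = 1 ↔ ∃ i, x i ≠ y i ∧ ∀ j, x j ≠ y j → j = i := by
  simp only [hammingDist, card_eq_one, eq_singleton_iff_unique_mem, mem_filter, mem_univ, true_and]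

end Hamming

def hammingGraph (ι β : Type*) [Fintype ι] [DecidableEq β] : SimpleGraph (ι → β) where
  Adj x y := hammingDist x y = 1
  symm := ⟨fun _ _ h => (hammingDist_comm _ _).trans h⟩
  loopless := ⟨fun _ h => by simp at h⟩

namespace hammingGraph

variable {ι β : Type*} [Fintype ι] [DecidableEq β]

instance : DecidableRel (hammingGraph ι β).Adj :=
  fun x y => inferInstanceAs (Decidable (hammingDist x y = 1))

theorem edgeSet_eq :
    (hammingGraph ι β).edgeSet =
      {e | ∃ x y : ι → β, e = s(x, y) ∧ x ≠ y ∧ hammingDist x y = 1} := by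
  ext e
  constructor
  · intro he
    induction e using Sym2.ind with
    | h x y => exact ⟨x, y, rfl, (hammingGraph ι β).ne_of_adj he, he⟩
  · rintro ⟨x, y, rfl, -, h⟩
    exact h

variable [DecidableEq ι]

theorem adj_iff_exists_update {x y : ι → β} :
    (hammingGraph ι β).Adj x y ↔ ∃ i b, b ≠ x i ∧ update x i b = y := by
  change hammingDist x y = 1 ↔ _
  rw [hammingDist_eq_one_iff]
  constructor
  · rintro ⟨i, hi, hy⟩
    refine ⟨i, y i, Ne.symm hi, funext fun j => ?_⟩
    rcases eq_or_ne j i with rfl | hj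
    · exact update_self ..
    · rw [update_of_ne hj, not_imp_comm.mp (hy j) hj]
  · rintro ⟨i, b, hb, rfl⟩
    refine ⟨i, by simpa using hb.symm, fun j hj => ?_⟩
    by_contra h
    exact hj (by rw [update_of_ne h])

variable [Fintype β]

theorem neighborFinset_eq (x : ι → β) :
    (hammingGraph ι β).neighborFinset x =
      univ.image fun p : Σ i, {b // b ≠ x i} => update x p.1 p.2 := by
  ext y
  simp [adj_iff_exists_update]

theorem degree_eq (x : ι → β) :
    (hammingGraph ι β).degree x = Fintype.card ι * (Fintype.card β - 1) := by
  rw [← SimpleGraph.card_neighborFinset_eq_degree, neighborFinset_eq, card_image_of_injective]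
  · simp [Fintype.card_sigma]
  · rintro ⟨i, b, hb⟩ ⟨i', b', hb'⟩ h
    obtain rfl : i = i' := by
      by_contra hne
      exact hb (by simpa [update_of_ne hne] using congrFun h i)
    obtain rfl : b = b' := by simpa using congrFun h i
    rfl

theorem two_mul_card_edgeFinset :
    2 * #(hammingGraph ι β).edgeFinset =
      Fintype.card ι * (Fintype.card β - 1) * Fintype.card β ^ Fintype.card ι := by
  rw [← SimpleGraph.sum_degrees_eq_twice_card_edges]
  simp [degree_eq, mul_comm]

end hammingGraph

theorem card_edgeFinset_hammingGraph_fin_bool (n : ℕ) :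
    #(hammingGraph (Fin n) Bool).edgeFinset = n * 2 ^ (n - 1) := by
  have h := hammingGraph.two_mul_card_edgeFinset (ι := Fin n) (β := Bool)
  rw [Fintype.card_fin, Fintype.card_bool] at h
  cases n with
  | zero => simpa using h
  | succ n =>
    rw [pow_succ] at h
    rw [Nat.add_sub_cancel]
    linarith

section TensorCoeff

variable {ι R : Type*} [Fintype ι] [CommSemiring R] {κ : ι → Type*}

noncomputable def tensorCoeff (k : ∀ i, κ i) : (⨂[R] i, (κ i → R)) →ₗ[R] R :=
  PiTensorProduct.lift
    ((MultilinearMap.mkPiAlgebra R ι R).compLinearMap fun i => LinearMap.proj (k i))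

theorem tensorCoeff_tprod (k : ∀ i, κ i) (u : ∀ i, κ i → R) :
    tensorCoeff k (⨂ₜ[R] i, u i) = ∏ i, u i (k i) := by
  simp [tensorCoeff]

theorem tensorCoeff_update_mul_tensorCoeff_update [DecidableEq ι] (u : ∀ i, κ i → R)
    (a b : ∀ i, κ i) (i : ι) :
    tensorCoeff (update a i (b i)) (⨂ₜ[R] i, u i) * tensorCoeff (update b i (a i)) (⨂ₜ[R] i, u i) =
      tensorCoeff a (⨂ₜ[R] i, u i) * tensorCoeff b (⨂ₜ[R] i, u i) := by
  simp only [tensorCoeff_tprod, ← prod_mul_distrib]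
  refine prod_congr rfl fun j _ => ?_
  rcases eq_or_ne j i with rfl | hj
  · simp only [update_self, mul_comm]
  · simp only [update_of_ne hj]

variable [∀ i, DecidableEq (κ i)]

noncomputable def basisTensor (a : ∀ i, κ i) : ⨂[R] i, (κ i → R) :=
  ⨂ₜ[R] i, Pi.single (a i) 1

theorem tensorCoeff_basisTensor (k a : ∀ i, κ i) :
    tensorCoeff k (basisTensor (R := R) a) = if k = a then 1 else 0 := by
  simp only [basisTensor, tensorCoeff_tprod, Pi.single_apply, prod_boole, mem_univ, true_implies,
    funext_iff]

theorem exists_tprod_eq_basisTensor_add_smul [Nonempty ι] [DecidableEq ι] {a b : ∀ i, κ i}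
    (h : hammingDist a b ≤ 1) (c : R) :
    ∃ u : ∀ i, κ i → R, basisTensor a + c • basisTensor b = ⨂ₜ[R] i, u i := by
  obtain ⟨i, hi⟩ := hammingDist_le_one_iff.mp h
  have hb : update (fun j => (Pi.single (a j) 1 : κ j → R)) i (Pi.single (b i) 1) =
      fun j => Pi.single (b j) 1 := by
    funext j
    rcases eq_or_ne j i with rfl | hj
    · exact update_self ..
    · rw [update_of_ne hj, not_imp_comm.mp (hi j) hj]
  refine ⟨update (fun j => Pi.single (a j) 1) i (Pi.single (a i) 1 + c • Pi.single (b i) 1), ?_⟩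
  rw [MultilinearMap.map_update_add, MultilinearMap.map_update_smul, update_eq_self, hb]
  rfl

theorem hammingDist_le_one_of_basisTensor_add_smul_eq_tprod {a b : ∀ i, κ i} {c : R}
    (hc : c ≠ 0) {u : ∀ i, κ i → R} (h : basisTensor a + c • basisTensor b = ⨂ₜ[R] i, u i) :
    hammingDist a b ≤ 1 := by
  classical
  by_contra! h2
  obtain ⟨i, hi, i', hi', hii'⟩ := one_lt_card.mp h2
  simp only [mem_filter, mem_univ, true_and] at hi hi'
  have hcoeff (k : ∀ i, κ i) :
      tensorCoeff k (⨂ₜ[R] i, u i) = (if k = a then 1 else 0) + c * if k = b then 1 else 0 := by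
    simp [← h, tensorCoeff_basisTensor]
  have hab : a ≠ b := fun e => hi (congrFun e i)
  have h1 : update a i (b i) ≠ a := fun e => hi (by simpa using (congrFun e i).symm)
  have h2 : update a i (b i) ≠ b := fun e =>
    hi' (by simpa [update_of_ne hii'.symm] using congrFun e i')
  have h3 : update b i (a i) ≠ a := fun e =>
    hi' (by simpa [update_of_ne hii'.symm] using (congrFun e i').symm)
  have h4 : update b i (a i) ≠ b := fun e => hi (by simpa using congrFun e i)
  have : (0 : R) = c := by
    simpa [hcoeff, h1, h2, h3, h4, hab, hab.symm] using
      tensorCoeff_update_mul_tensorCoeff_update u a b i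
  exact hc this.symm

end TensorCoeff

theorem basisVec_eq_basisTensor {n : ℕ} (j : Fin n → Bool) :
    basisVec j = basisTensor fun i => finTwoEquiv.symm (j i) := by
  unfold basisVec basisTensor
  congr
  funext i k
  cases h : j i <;> fin_cases k <;> simp [h, finTwoEquiv]

theorem isProductState_basisVec_add_smul_iff {n : ℕ} (hn : 1 ≤ n) (j j' : Fin n → Bool) {c : ℂ}
    (hc : c ≠ 0) : IsProductState (basisVec j + c • basisVec j') ↔ hammingDist j j' ≤ 1 := by
  have : Nonempty (Fin n) := ⟨⟨0, hn⟩⟩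
  rw [basisVec_eq_basisTensor, basisVec_eq_basisTensor,
    ← hammingDist_comp (fun _ => finTwoEquiv.symm) fun _ => finTwoEquiv.symm.injective]
  exact ⟨fun ⟨_, hu⟩ => hammingDist_le_one_of_basisTensor_add_smul_eq_tprod hc hu,
    fun h => exists_tprod_eq_basisTensor_add_smul h c⟩

/-- Among the two-term states `|j⟩ + i^ℓ |j'⟩`, the product states are exactly those
with Hamming distance `d_H(j,j') ≤ 1`; the number of unordered pairs `{j,j'}` with
`j ≠ j'` giving product states is `n·2^{n−1}`. -/
theorem product_two_term_states (n : ℕ) (hn : 1 ≤ n) :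
    (∀ (j j' : Fin n → Bool) (ℓ : Fin 4),
      IsProductState (basisVec j + (I : ℂ) ^ (ℓ : ℕ) • basisVec j')
        ↔ hammingDist j j' ≤ 1) ∧
    {e : Sym2 (Fin n → Bool) | ∃ j j' : Fin n → Bool,
        e = s(j, j') ∧ j ≠ j' ∧ hammingDist j j' = 1}.ncard = n * 2 ^ (n - 1) := by
  refine ⟨fun j j' ℓ => isProductState_basisVec_add_smul_iff hn j j' (pow_ne_zero _ I_ne_zero), ?_⟩
  rw [← hammingGraph.edgeSet_eq, ← SimpleGraph.coe_edgeFinset, Set.ncard_coe_finset]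
  exact card_edgeFinset_hammingGraph_fin_bool n
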